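/- arXiv:1612.09476 — 2 statements merged into one kernel-verified Lean document; each statement's English description precedes it below -/
import Mathlib

section
/- Fix 1 ≤ i ≤ M, m ≥ 1 and a ∈ ℂˣ. For T ∈ ℬ₋(mϖ_i) define the ℓ-weight m_T := ∏_{k=1}^{i} ∏_{l=1}^{m} ⬜T(−k,−l)_{aτ_i q^{2(k−l)}}, and let H ∈ ℬ₋(mϖ_i) be the tableau H(−k,−l) = i+1−k. Then: (1) for every 1 ≤ l ≤ m, ∏_{k=1}^{i} ⬜k_{aτ_i q^{2(i+1−k−l)}} = Y_{i,aq^{2−2l}}, and consequently m_H = ϖ^{(i)}_{m,a}; (2) for every T ∈ ℬ₋(mϖ_i) with T ≠ H, the ratio m_T · m_H⁻¹ equals A_{i,aq}⁻¹ times an element of ℒ𝒬⁻. -/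
open scoped Classical

noncomputable section

namespace QAS

/-- ℓ-weights: an `I`-tuple (indexed by `ℕ`, only indices `1,…,M+N` are relevant) of
rational functions together with a parity in `ℤ/2`.  The group law is componentwise
multiplication of rational functions and addition of parities. -/
abbrev LW : Type := (ℕ → RatFunc ℂ) × Multiplicative (ZMod 2)

/-- the variable `z` -/
def Z : RatFunc ℂ := RatFunc.X

/-- constant rational functions -/
def Cc (c : ℂ) : RatFunc ℂ := RatFunc.C c

/-- parity `|ε_j|` (indices are 1-based) -/
def par (M : ℕ) (j : ℕ) : ZMod 2 := if j ≤ M then 0 else 1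

/-- `q_j` -/
def qq (M : ℕ) (q : ℂ) (j : ℕ) : ℂ := if j ≤ M then q else q⁻¹

/-- `(ε_j, ε_j) = ±1` -/
def sgn (M : ℕ) (j : ℕ) : ℤ := if j ≤ M then 1 else -1

/-- `q̂_i` -/
def qhat (M : ℕ) (q : ℂ) (i : ℕ) : ℂ := if i = M then q⁻¹ else qq M q i

/-- `τ_i` -/
def tau (M N : ℕ) (q : ℂ) (i : ℕ) : ℂ :=
  if i ≤ M then q ^ ((M : ℤ) - N + 1 - i) else q ^ ((i : ℤ) - M + 1 - N)

/-- `θ_j` -/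
def theta (M N : ℕ) (q : ℂ) (j : ℕ) : ℂ :=
  if j ≤ M then q ^ (2 * ((M : ℤ) - N + 1 - j)) else q ^ (2 * ((j : ℤ) - M - N))

/-- `(ε_k, ε_l)` -/
def epsPair (M : ℕ) (k l : ℕ) : ℤ := if k = l then sgn M k else 0

/-- `(α_i, α_j)` where `α_i = ε_i - ε_{i+1}` -/
def alphaPair (M : ℕ) (i j : ℕ) : ℤ :=
  epsPair M i j - epsPair M i (j + 1) - epsPair M (i + 1) j + epsPair M (i + 1) (j + 1)

/-- the set of `j ∈ I₀` with `j ∼ i`, i.e. `|i - j| = 1` -/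
def nbr (M N : ℕ) (i : ℕ) : Finset ℕ :=
  (Finset.Icc 1 (M + N - 1)).filter fun j => j + 1 = i ∨ j = i + 1

/-- the ℓ-weight `⬜j_a` -/
def box (M N : ℕ) (q : ℂ) (j : ℕ) (a : ℂ) : LW :=
  (fun k => if k = j then
      Cc (qq M q j) * (1 - Cc (a * (theta M N q j)⁻¹ * (qq M q j)⁻¹) * Z) /
        (1 - Cc (a * (theta M N q j)⁻¹ * qq M q j) * Z)
    else 1,
   Multiplicative.ofAdd (par M j))

/-- the generalized simple root `A_{i,a}` -/
def Amat (M N : ℕ) (q : ℂ) (i : ℕ) (a : ℂ) : LW :=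
  (fun k =>
    if k = i then
      Cc (qq M q i) *
        (1 - Cc (a * tau M N q i * q⁻¹ * (theta M N q i)⁻¹ * (qq M q i)⁻¹) * Z) /
        (1 - Cc (a * tau M N q i * q⁻¹ * (theta M N q i)⁻¹ * qq M q i) * Z)
    else if k = i + 1 then
      Cc (qq M q (i + 1))⁻¹ *
        (1 - Cc (a * tau M N q i * q⁻¹ * (theta M N q i)⁻¹ * qq M q i * qq M q (i + 1) ^ 2) * Z) /
        (1 - Cc (a * tau M N q i * q⁻¹ * (theta M N q i)⁻¹ * qq M q i) * Z)
    else 1,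
   Multiplicative.ofAdd (par M i + par M (i + 1)))

/-- the prefundamental ℓ-weight `Ψ_{i,a}` -/
def Psi (M N : ℕ) (q : ℂ) (i : ℕ) (a : ℂ) : LW :=
  (fun k =>
    if i ≤ M then (if 1 ≤ k ∧ k ≤ i then 1 - Cc (a * (tau M N q i)⁻¹) * Z else 1)
    else (if i < k ∧ k ≤ M + N then (1 - Cc (a * (tau M N q i)⁻¹) * Z)⁻¹ else 1),
   1)

/-- the ℓ-weight `[a]_i` -/
def bra (M N : ℕ) (i : ℕ) (a : ℂ) : LW :=
  (fun k =>
    if i ≤ M then (if 1 ≤ k ∧ k ≤ i then Cc a else 1)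
    else (if i < k ∧ k ≤ M + N then Cc a⁻¹ else 1),
   1)

/-- the ℓ-weight `𝔴^{(i)}_{c,a} = [c]_i Ψ_{i,ac⁻²} Ψ_{i,a}⁻¹` -/
def wAsym (M N : ℕ) (q : ℂ) (i : ℕ) (c a : ℂ) : LW :=
  bra M N i c * Psi M N q i (a * (c ^ 2)⁻¹) * (Psi M N q i a)⁻¹

/-- the ℓ-weight `𝔫^{(i)}_{c,a}` -/
def nAsym (M N : ℕ) (q : ℂ) (i : ℕ) (c a : ℂ) : LW :=
  wAsym M N q i (qhat M q i) (a * qhat M q i ^ 2) *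
    ∏ j ∈ nbr M N i, wAsym M N q j ((c ^ alphaPair M i j)⁻¹) (a * q ^ alphaPair M i j)

/-- a scalar rational function viewed as an ℓ-weight (all relevant components equal to it,
parity `0̄`) -/
def scalarLW (M N : ℕ) (h : RatFunc ℂ) : LW :=
  (fun k => if 1 ≤ k ∧ k ≤ M + N then h else 1, 1)

/-- equivalence of ℓ-weights: `f ≡ g` iff `f g⁻¹ = ((h p_1, …, h p_κ); s)` with `h`
regular and nonvanishing at `z = 0` and `p_k ∈ ℂˣ` -/
def lequiv (M N : ℕ) (f g : LW) : Prop :=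
  ∃ h : RatFunc ℂ, Polynomial.eval 0 h.denom ≠ 0 ∧ Polynomial.eval 0 h.num ≠ 0 ∧
    ∃ p : ℕ → ℂ, ∀ k, 1 ≤ k → k ≤ M + N → p k ≠ 0 ∧ f.1 k * (g.1 k)⁻¹ = h * Cc (p k)

/-- substitution `z ↦ cz` in a rational function -/
def scaleVar (c : ℂ) (f : RatFunc ℂ) : RatFunc ℂ :=
  Polynomial.eval₂ (RatFunc.C : ℂ →+* RatFunc ℂ) (Cc c * Z) f.num /
    Polynomial.eval₂ (RatFunc.C : ℂ →+* RatFunc ℂ) (Cc c * Z) f.denom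

/-- `C_i(f)(z) = ∏_{j=i}^{κ} f_j(zθ_j)^{(ε_j,ε_j)}` -/
def CFun (M N : ℕ) (q : ℂ) (i : ℕ) (f : LW) : RatFunc ℂ :=
  ∏ j ∈ Finset.Icc i (M + N), scaleVar (theta M N q j) (f.1 j) ^ sgn M j

/-- `t_1 = θ_1` and `t_i = τ_{i-1}² q⁻²` for `i > 1` -/
def tSmall (M N : ℕ) (q : ℂ) (i : ℕ) : ℂ :=
  if i = 1 then theta M N q 1 else tau M N q (i - 1) ^ 2 * (q ^ 2)⁻¹

/-- the ℓ-weights `⬜j*_a`, defined by `⬜1*_a = (⬜1_{aθ_1})⁻¹` and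
`⬜(i+1)*_a = ⬜i*_a · A_{i, aτ_i q⁻¹}` -/
def boxStar (M N : ℕ) (q : ℂ) : ℕ → ℂ → LW
  | 0, _ => 1
  | 1, a => (box M N q 1 (a * theta M N q 1))⁻¹
  | i + 2, a => boxStar M N q (i + 1) a * Amat M N q (i + 1) (a * tau M N q (i + 1) * q⁻¹)

/-- auxiliary downwards recursion for `⬜j′_a`; the argument is `κ - j` -/
def boxPrimeAux (M N : ℕ) (q : ℂ) (a : ℂ) : ℕ → LW
  | 0 => (box M N q (M + N) a)⁻¹
  | d + 1 => boxPrimeAux M N q a d *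
      (Amat M N q (M + N - (d + 1)) (a * tau M N q (M + N - (d + 1)) * q⁻¹))⁻¹

/-- the ℓ-weights `⬜j′_a`, defined by `⬜κ′_a = (⬜κ_a)⁻¹` and
`⬜(i+1)′_a = ⬜i′_a · A_{i, aτ_i q⁻¹}` -/
def boxPrime (M N : ℕ) (q : ℂ) (j : ℕ) (a : ℂ) : LW := boxPrimeAux M N q a (M + N - j)

/-- `q^λ` as an ℓ-weight, for `λ ∈ ℤ^I` -/
def qpow (M N : ℕ) (q : ℂ) (lam : ℕ → ℤ) : LW :=
  (fun k => if 1 ≤ k ∧ k ≤ M + N then Cc (q ^ (lam k * sgn M k)) else 1,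
   Multiplicative.ofAdd
     (((∑ k ∈ Finset.Icc 1 (M + N), if k ≤ M then (0 : ℤ) else lam k) : ZMod 2)))

/-- the fundamental weight `ϖ_i` for `i ≤ M` -/
def varpi (i : ℕ) : ℕ → ℤ := fun k => if 1 ≤ k ∧ k ≤ i then 1 else 0

/-- `Y_{i,a}` for `i ≤ M` -/
def YLW (M N : ℕ) (q : ℂ) (i : ℕ) (a : ℂ) : LW :=
  qpow M N q (varpi i) * Psi M N q i (a * (qq M q i)⁻¹) * (Psi M N q i (a * qq M q i))⁻¹

/-- `ϖ^{(i)}_{m,a}` for `i ≤ M` -/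
def varpiLW (M N : ℕ) (q : ℂ) (i m : ℕ) (a : ℂ) : LW :=
  qpow M N q (fun k => (m : ℤ) * varpi i k) *
    Psi M N q i (a * qq M q i ^ (1 - 2 * (m : ℤ))) * (Psi M N q i (a * qq M q i))⁻¹

/-- the submonoid `ℒ𝒬⁻` generated by the `A_{j,b}⁻¹` -/
def LQneg (M N : ℕ) (q : ℂ) : Submonoid LW :=
  Submonoid.closure
    {w | ∃ j : ℕ, ∃ b : ℂ, 1 ≤ j ∧ j ≤ M + N - 1 ∧ b ≠ 0 ∧ w = (Amat M N q j b)⁻¹}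

/-- `λ ∈ 𝒫` (1-based coordinates; `λ_j = 0` outside `1,…,M+N`) -/
def inP (M N : ℕ) (lam : ℕ → ℕ) : Prop :=
  lam 0 = 0 ∧ (∀ j, M + N < j → lam j = 0) ∧
  (∀ k l, 1 ≤ k → k ≤ l → l ≤ M → lam l ≤ lam k) ∧
  (∀ k l, M + 1 ≤ k → k ≤ l → l ≤ M + N → lam l ≤ lam k) ∧
  (∀ j, 1 ≤ j → j ≤ N → 0 < lam (M + j) → j ≤ lam M)

/-- the Young diagram `Y₊^λ ⊂ ℤ_{>0}²` -/
def Yp (M N : ℕ) (lam : ℕ → ℕ) : Set (ℕ × ℕ) :=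
  {p | 1 ≤ p.1 ∧ 1 ≤ p.2 ∧
    ((p.1 ≤ M ∧ p.2 ≤ lam p.1) ∨ (M < p.1 ∧ p.2 ≤ N ∧ p.1 ≤ M + lam (M + p.2)))}

/-- `Y₋^λ = -Y₊^λ ⊂ ℤ_{<0}²` -/
def YnZ (M N : ℕ) (lam : ℕ → ℕ) : Set (ℤ × ℤ) :=
  {p | ∃ k l : ℕ, (k, l) ∈ Yp M N lam ∧ p = (-(k : ℤ), -(l : ℤ))}

/-- tableau conditions on a domain `Y ⊂ ℤ²`, with entries in `{1,…,kap}` and the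
strictness threshold `MM` (tableaux are encoded as functions `ℤ × ℤ → ℕ`
vanishing off `Y`) -/
def isTab (MM kap : ℕ) (Y : Set (ℤ × ℤ)) (T : ℤ × ℤ → ℕ) : Prop :=
  (∀ p, p ∉ Y → T p = 0) ∧
  (∀ p ∈ Y, 1 ≤ T p ∧ T p ≤ kap) ∧
  (∀ p ∈ Y, ∀ p' ∈ Y, p.1 ≤ p'.1 → p.2 ≤ p'.2 → T p ≤ T p') ∧
  (∀ p ∈ Y, (p.1 + 1, p.2) ∈ Y → T p ≤ MM → T p < T (p.1 + 1, p.2)) ∧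
  (∀ p ∈ Y, (p.1, p.2 + 1) ∈ Y → MM < T p → T p < T (p.1, p.2 + 1))

/-- the set of tableaux `ℬ₋(λ)` -/
def Bneg (M N : ℕ) (lam : ℕ → ℕ) : Set (ℤ × ℤ → ℕ) :=
  {T | isTab M (M + N) (YnZ M N lam) T}

/-- `mϖ_j`: the first `j` coordinates equal `m`, the others vanish -/
def wt (j m : ℕ) : ℕ → ℕ := fun k => if 1 ≤ k ∧ k ≤ j then m else 0

/-- `m_T = ∏_{k=1}^{i} ∏_{l=1}^{m} ⬜T(-k,-l)_{aτ_i q^{2(k-l)}}` for `T ∈ ℬ₋(mϖ_i)` -/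
def mTab (M N : ℕ) (q : ℂ) (i m : ℕ) (a : ℂ) (T : ℤ × ℤ → ℕ) : LW :=
  ∏ k ∈ Finset.Icc 1 i, ∏ l ∈ Finset.Icc 1 m,
    box M N q (T (-(k : ℤ), -(l : ℤ))) (a * tau M N q i * q ^ (2 * ((k : ℤ) - l)))

/-- the highest tableau `H ∈ ℬ₋(mϖ_i)`, `H(-k,-l) = i + 1 - k` -/
def Htab (i m : ℕ) : ℤ × ℤ → ℕ := fun p =>
  if 1 ≤ -p.1 ∧ -p.1 ≤ (i : ℤ) ∧ 1 ≤ -p.2 ∧ -p.2 ≤ (m : ℤ) then i + 1 - (-p.1).toNat else 0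

/-- `m_T = ∏_{(i,j) ∈ Y₋^λ} ⬜T(i,j)_{aq^{2(j-i)+1}}` for `T ∈ ℬ₋(λ)`, written as a
product over a bounding rectangle of the Young diagram -/
def mTgen (M N : ℕ) (q : ℂ) (lam : ℕ → ℕ) (a : ℂ) (T : ℤ × ℤ → ℕ) : LW :=
  ∏ k ∈ Finset.Icc 1 (M + lam (M + 1)), ∏ l ∈ Finset.Icc 1 (max (lam 1) N),
    if (k, l) ∈ Yp M N lam then
      box M N q (T (-(k : ℤ), -(l : ℤ))) (a * q ^ (2 * ((k : ℤ) - l) + 1))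
    else 1

/-- the normalization factor `f^{(i)}_{c,a}(z)` -/
def fRF (M N : ℕ) (q : ℂ) (i : ℕ) (c a : ℂ) : RatFunc ℂ :=
  if i ≤ M then 1 - Cc (a * q ^ ((M : ℤ) - N - i - 1)) * Z
  else (1 - Cc (a * (c ^ 2)⁻¹ * q ^ ((M : ℤ) + N - i - 1)) * Z) *
      (1 - Cc (a * q ^ ((i : ℤ) - M - N - 1)) * Z) /
      (1 - Cc (a * q ^ ((M : ℤ) + N - i - 1)) * Z)


/-! ## auxiliary lemmas -/

lemma Cc_ne {c : ℂ} (hc : c ≠ 0) : Cc c ≠ 0 := by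
  simpa [Cc] using hc

lemma one_sub_ne (c : ℂ) : (1 : RatFunc ℂ) - Cc c * Z ≠ 0 := by
  have h : (1 : RatFunc ℂ) - Cc c * Z =
      algebraMap (Polynomial ℂ) (RatFunc ℂ) (1 - Polynomial.C c * Polynomial.X) := by
    simp [Cc, Z, RatFunc.algebraMap_C, RatFunc.algebraMap_X]
  rw [h]
  simp only [ne_eq, FaithfulSMul.algebraMap_eq_zero_iff]
  intro h2
  have := congrArg (Polynomial.eval 0) h2
  simp at this

lemma qq_ne {M : ℕ} {q : ℂ} (hq : q ≠ 0) (j : ℕ) : qq M q j ≠ 0 := by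
  unfold qq; split <;> simp [hq]

lemma tau_ne {M N : ℕ} {q : ℂ} (hq : q ≠ 0) (j : ℕ) : tau M N q j ≠ 0 := by
  unfold tau; split <;> exact zpow_ne_zero _ hq

lemma theta_ne {M N : ℕ} {q : ℂ} (hq : q ≠ 0) (j : ℕ) : theta M N q j ≠ 0 := by
  unfold theta; split <;> exact zpow_ne_zero _ hq

lemma box_fst_ne {M N : ℕ} {q : ℂ} (hq : q ≠ 0) (j : ℕ) (a : ℂ) (k : ℕ) :
    (box M N q j a).1 k ≠ 0 := by
  unfold box
  dsimp only
  split
  · exact div_ne_zero (mul_ne_zero (Cc_ne (qq_ne hq j)) (one_sub_ne _)) (one_sub_ne _)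
  · exact one_ne_zero

lemma LW_mul_inv {x : LW} (hx : ∀ k, x.1 k ≠ 0) : x * x⁻¹ = 1 := by
  refine Prod.ext ?_ ?_
  · funext k
    exact mul_inv_cancel₀ (hx k)
  · exact mul_inv_cancel x.2
lemma theta_succ {M N : ℕ} (hM : 1 ≤ M) {q : ℂ} (hq : q ≠ 0) (j : ℕ) :
    theta M N q (j + 1) * qq M q j * qq M q (j + 1) = theta M N q j := by
  have hqq : q * q = q ^ (2 : ℤ) := by rw [zpow_two]
  have hqq' : q⁻¹ * q⁻¹ = q ^ (-2 : ℤ) := by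
    rw [zpow_neg, zpow_two, mul_inv]
  unfold theta qq
  rcases lt_trichotomy j M with h | h | h
  · rw [if_pos (by omega : j + 1 ≤ M), if_pos (by omega : j ≤ M), if_pos (by omega : j ≤ M),
      if_pos (by omega : j + 1 ≤ M)]
    rw [mul_assoc, hqq, ← zpow_add₀ hq]
    congr 1
    push_cast
    ring
  · subst h
    rw [if_neg (by omega), if_pos le_rfl, if_pos le_rfl, if_neg (by omega)]
    rw [mul_assoc, mul_inv_cancel₀ hq, mul_one]
    congr 1
    push_cast
    ring
  · rw [if_neg (by omega), if_neg (by omega), if_neg (by omega), if_neg (by omega)]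
    rw [mul_assoc, hqq', ← zpow_add₀ hq]
    congr 1
    push_cast
    ring
lemma box_step {M N : ℕ} (hM : 1 ≤ M) {q : ℂ} (hq : q ≠ 0) (j : ℕ) (a : ℂ) :
    box M N q (j + 1) a
      = box M N q j a * (Amat M N q j (a * q * (tau M N q j)⁻¹))⁻¹ := by
  have hτ := tau_ne (M := M) (N := N) hq j
  have hθ := theta_ne (M := M) (N := N) hq j
  have hθ' := theta_ne (M := M) (N := N) hq (j + 1)
  have hQ := qq_ne (M := M) hq j
  have hQ' := qq_ne (M := M) hq (j + 1)
  have hb : a * q * (tau M N q j)⁻¹ * tau M N q j * q⁻¹ = a := by field_simp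
  have e := theta_succ (N := N) hM hq j
  have h1 : a * (theta M N q (j + 1))⁻¹ * (qq M q (j + 1))⁻¹
      = a * (theta M N q j)⁻¹ * qq M q j := by
    rw [← e]; field_simp
  have h2 : a * (theta M N q (j + 1))⁻¹ * qq M q (j + 1)
      = a * (theta M N q j)⁻¹ * qq M q j * qq M q (j + 1) ^ 2 := by
    rw [← e]; field_simp
  refine Prod.ext ?_ ?_
  · funext k
    show (box M N q (j + 1) a).1 k
      = (box M N q j a).1 k * ((Amat M N q j (a * q * (tau M N q j)⁻¹)).1 k)⁻¹
    unfold box Amat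
    dsimp only
    rcases eq_or_ne k j with hk | hk
    · subst hk
      rw [if_neg (by omega), if_pos rfl, if_pos rfl, hb]
      rw [mul_inv_cancel₀
        (div_ne_zero (mul_ne_zero (Cc_ne hQ) (one_sub_ne _)) (one_sub_ne _))]
    · rcases eq_or_ne k (j + 1) with hk' | hk'
      · subst hk'
        rw [if_pos rfl, if_neg hk, if_neg hk, if_pos rfl, hb, h1, h2]
        have hu := one_sub_ne (a * (theta M N q j)⁻¹ * qq M q j)
        have hv := one_sub_ne (a * (theta M N q j)⁻¹ * qq M q j * qq M q (j + 1) ^ 2)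
        have hC : Cc (qq M q (j + 1))⁻¹ = (Cc (qq M q (j + 1)))⁻¹ :=
          map_inv₀ (RatFunc.C : ℂ →+* RatFunc ℂ) _
        have hCQ' : Cc (qq M q (j + 1)) ≠ 0 := Cc_ne hQ'
        rw [hC]
        field_simp
      · rw [if_neg hk', if_neg hk, if_neg hk, if_neg hk']
        simp
  · show Multiplicative.ofAdd (par M (j + 1))
      = Multiplicative.ofAdd (par M j) * (Multiplicative.ofAdd (par M j + par M (j + 1)))⁻¹
    rw [← ofAdd_neg, ← ofAdd_add]
    exact congrArg Multiplicative.ofAdd ((by decide : ∀ a b : ZMod 2, b = a + -(a + b)) _ _)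
lemma box_chain {M N : ℕ} (hM : 1 ≤ M) {q : ℂ} (hq : q ≠ 0) (a : ℂ) (j : ℕ) (hj : 1 ≤ j) :
    ∀ c : ℕ, j ≤ c →
    box M N q c a = box M N q j a *
      ∏ r ∈ Finset.Icc j (c - 1), (Amat M N q r (a * q * (tau M N q r)⁻¹))⁻¹ := by
  intro c hc
  induction c, hc using Nat.le_induction with
  | base =>
      rw [Finset.Icc_eq_empty (by omega), Finset.prod_empty, mul_one]
  | succ c hc ih =>
      rw [box_step hM hq c a, ih, show c + 1 - 1 = c from rfl,
        show c = (c - 1) + 1 by omega, Finset.prod_Icc_succ_top (by omega),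
        ← show c = (c - 1) + 1 by omega, mul_assoc]
lemma part1 {M N : ℕ} (hM : 1 ≤ M) {q : ℂ} (hq : q ≠ 0) (i : ℕ) (hi : 1 ≤ i) (hiM : i ≤ M)
    (a : ℂ) (l : ℤ) :
    ∏ k ∈ Finset.Icc 1 i, box M N q k (a * tau M N q i * q ^ (2 * ((i : ℤ) + 1 - k - l)))
      = YLW M N q i (a * q ^ (2 - 2 * l)) := by
  have zq : ∀ e : ℤ, q ^ e * q = q ^ (e + 1) := fun e => by rw [zpow_add₀ hq, zpow_one]
  have zq' : ∀ e : ℤ, q * q ^ e = q ^ (1 + e) := fun e => by rw [zpow_add₀ hq, zpow_one]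
  have zqi : q⁻¹ = q ^ (-1 : ℤ) := (zpow_neg_one q).symm
  refine Prod.ext ?_ ?_
  · rw [Prod.fst_prod]
    funext n
    rw [Finset.prod_apply]
    simp only [box, YLW, qpow, Psi, varpi, Prod.fst_mul, Prod.fst_inv, Pi.mul_apply,
      Pi.inv_apply]
    rw [Finset.prod_ite_eq]
    by_cases hn : 1 ≤ n ∧ n ≤ i
    · rw [if_pos (Finset.mem_Icc.mpr hn), if_pos ⟨hn.1, le_trans hn.2 (by omega)⟩,
        if_pos hn, if_pos (le_trans hiM le_rfl), if_pos hn, if_pos (le_trans hiM le_rfl),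
        if_pos hn]
      have hqqn : qq M q n = q := if_pos (le_trans hn.2 hiM)
      have hqqi : qq M q i = q := if_pos hiM
      have hsgn : sgn M n = 1 := if_pos (le_trans hn.2 hiM)
      have hs1 : a * tau M N q i * q ^ (2 * ((i : ℤ) + 1 - n - l)) * (theta M N q n)⁻¹ *
          (qq M q n)⁻¹ = a * q ^ (2 - 2 * l) * (qq M q i)⁻¹ * (tau M N q i)⁻¹ := by
        rw [hqqn, hqqi]
        unfold tau theta
        rw [if_pos hiM, if_pos (le_trans hn.2 hiM)]
        simp only [zqi, ← zpow_neg, mul_assoc, zq, zq', ← zpow_add₀ hq]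
        congr 1
        ring
      have hs2 : a * tau M N q i * q ^ (2 * ((i : ℤ) + 1 - n - l)) * (theta M N q n)⁻¹ *
          qq M q n = a * q ^ (2 - 2 * l) * qq M q i * (tau M N q i)⁻¹ := by
        rw [hqqn, hqqi]
        unfold tau theta
        rw [if_pos hiM, if_pos (le_trans hn.2 hiM)]
        simp only [zqi, ← zpow_neg, mul_assoc, zq, zq', ← zpow_add₀ hq]
        congr 1
        ring
      rw [hs1, hs2, hqqn, hsgn, mul_one, zpow_one, div_eq_mul_inv]
    · rw [if_neg (fun h => hn (Finset.mem_Icc.mp h))]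
      rw [if_pos hiM, if_pos hiM, if_neg hn, if_neg hn, if_neg hn]
      by_cases hn2 : 1 ≤ n ∧ n ≤ M + N
      · rw [if_pos hn2]
        simp [Cc]
      · rw [if_neg hn2]
        norm_num
  · rw [Prod.snd_prod]
    simp only [box, YLW, qpow, Psi, varpi, Prod.snd_mul, Prod.snd_inv]
    rw [Finset.prod_eq_one, Finset.sum_eq_zero]
    · norm_num
    · intro k hk
      by_cases hkM : k ≤ M
      · rw [if_pos hkM]; exact Int.cast_zero
      · rw [if_neg hkM, if_neg (by omega)]; exact Int.cast_zero
    · intro k hk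
      have : par M k = 0 := if_pos (le_trans (Finset.mem_Icc.mp hk).2 hiM)
      rw [this]
      rfl
lemma telescope {q : ℂ} (hq : q ≠ 0) (c : ℂ) (m : ℕ) :
    ∏ l ∈ Finset.Icc 1 m,
      ((1 - Cc (c * q ^ (1 - 2 * (l : ℤ))) * Z) * (1 - Cc (c * q ^ (3 - 2 * (l : ℤ))) * Z)⁻¹)
      = (1 - Cc (c * q ^ (1 - 2 * (m : ℤ))) * Z) * (1 - Cc (c * q) * Z)⁻¹ := by
  induction m with
  | zero =>
      rw [Finset.Icc_eq_empty (by omega), Finset.prod_empty]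
      rw [show ((1 : ℤ) - 2 * ((0 : ℕ) : ℤ)) = 1 by ring, zpow_one,
        mul_inv_cancel₀ (one_sub_ne _)]
  | succ m ih =>
      rw [Finset.prod_Icc_succ_top (by omega), ih]
      have h1 : ((1 : ℤ) - 2 * ((m + 1 : ℕ) : ℤ)) = -1 - 2 * m := by push_cast; ring
      have h2 : ((3 : ℤ) - 2 * ((m + 1 : ℕ) : ℤ)) = 1 - 2 * m := by push_cast; ring
      rw [h1, h2]
      have hu := one_sub_ne (c * q ^ ((1 : ℤ) - 2 * (m : ℤ)))
      have hv := one_sub_ne (c * q)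
      field_simp
lemma prodY {M N : ℕ} {q : ℂ} (hq : q ≠ 0) (i : ℕ) (hiM : i ≤ M) (a : ℂ) (m : ℕ) :
    ∏ l ∈ Finset.Icc 1 m, YLW M N q i (a * q ^ (2 - 2 * (l : ℤ)))
      = varpiLW M N q i m a := by
  have zq : ∀ e : ℤ, q ^ e * q = q ^ (e + 1) := fun e => by rw [zpow_add₀ hq, zpow_one]
  have zq' : ∀ e : ℤ, q * q ^ e = q ^ (1 + e) := fun e => by rw [zpow_add₀ hq, zpow_one]
  have zqi : q⁻¹ = q ^ (-1 : ℤ) := (zpow_neg_one q).symm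
  have hqqi : qq M q i = q := if_pos hiM
  have hτ := tau_ne (M := M) (N := N) hq i
  refine Prod.ext ?_ ?_
  · rw [Prod.fst_prod]
    funext n
    rw [Finset.prod_apply]
    by_cases hn : 1 ≤ n ∧ n ≤ i
    · have hnMN : 1 ≤ n ∧ n ≤ M + N := ⟨hn.1, by omega⟩
      have hsgn : sgn M n = 1 := if_pos (le_trans hn.2 hiM)
      have hs1 : ∀ l : ℤ, a * q ^ (2 - 2 * l) * q⁻¹ * (tau M N q i)⁻¹
          = a * (tau M N q i)⁻¹ * q ^ (1 - 2 * l) := by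
        intro l
        unfold tau
        rw [if_pos hiM]
        simp only [zqi, ← zpow_neg, mul_assoc, zq, zq', ← zpow_add₀ hq]
        congr 1
        ring
      have hs2 : ∀ l : ℤ, a * q ^ (2 - 2 * l) * q * (tau M N q i)⁻¹
          = a * (tau M N q i)⁻¹ * q ^ (3 - 2 * l) := by
        intro l
        unfold tau
        rw [if_pos hiM]
        simp only [zqi, ← zpow_neg, mul_assoc, zq, zq', ← zpow_add₀ hq]
        congr 1
        ring
      have Yc : ∀ l ∈ Finset.Icc 1 m, (YLW M N q i (a * q ^ (2 - 2 * (l : ℤ)))).1 n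
          = Cc (q ^ (1 : ℤ)) *
            ((1 - Cc (a * (tau M N q i)⁻¹ * q ^ (1 - 2 * (l : ℤ))) * Z) *
             (1 - Cc (a * (tau M N q i)⁻¹ * q ^ (3 - 2 * (l : ℤ))) * Z)⁻¹) := by
        intro l _
        simp only [YLW, qpow, Psi, varpi, Prod.fst_mul, Prod.fst_inv, Pi.mul_apply,
          Pi.inv_apply]
        rw [if_pos hnMN, if_pos hiM, if_pos hiM, if_pos hn, if_pos hn, if_pos hn, hsgn,
          hqqi, hs1 (l : ℤ), hs2 (l : ℤ), mul_assoc]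
        norm_num
      have Vc : (varpiLW M N q i m a).1 n
          = Cc (q ^ (m : ℤ)) *
            ((1 - Cc (a * (tau M N q i)⁻¹ * q ^ (1 - 2 * (m : ℤ))) * Z) *
             (1 - Cc (a * (tau M N q i)⁻¹ * q) * Z)⁻¹) := by
        simp only [varpiLW, qpow, Psi, varpi, Prod.fst_mul, Prod.fst_inv, Pi.mul_apply,
          Pi.inv_apply]
        rw [if_pos hnMN, if_pos hiM, if_pos hiM, if_pos hn, if_pos hn, if_pos hn, hsgn,
          hqqi]
        rw [show a * q ^ (1 - 2 * (m : ℤ)) * (tau M N q i)⁻¹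
            = a * (tau M N q i)⁻¹ * q ^ (1 - 2 * (m : ℤ)) by ring]
        rw [show a * q * (tau M N q i)⁻¹ = a * (tau M N q i)⁻¹ * q by ring]
        rw [mul_assoc]
        norm_num
      rw [Finset.prod_congr rfl Yc, Finset.prod_mul_distrib, Finset.prod_const,
        telescope hq (a * (tau M N q i)⁻¹) m, Vc]
      congr 1
      rw [zpow_one]
      unfold Cc
      rw [Nat.card_Icc, zpow_natCast, map_pow]
      norm_num
    · have Yc : ∀ l ∈ Finset.Icc 1 m, (YLW M N q i (a * q ^ (2 - 2 * (l : ℤ)))).1 n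
          = 1 := by
        intro l _
        simp only [YLW, qpow, Psi, varpi, Prod.fst_mul, Prod.fst_inv, Pi.mul_apply,
          Pi.inv_apply]
        rw [if_pos hiM, if_pos hiM, if_neg hn, if_neg hn, if_neg hn]
        by_cases hn2 : 1 ≤ n ∧ n ≤ M + N
        · rw [if_pos hn2]
          simp [Cc]
        · rw [if_neg hn2]
          norm_num
      have Vc : (varpiLW M N q i m a).1 n = 1 := by
        simp only [varpiLW, qpow, Psi, varpi, Prod.fst_mul, Prod.fst_inv, Pi.mul_apply,
          Pi.inv_apply]
        rw [if_pos hiM, if_pos hiM, if_neg hn, if_neg hn, if_neg hn, mul_zero]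
        by_cases hn2 : 1 ≤ n ∧ n ≤ M + N
        · rw [if_pos hn2]
          simp [Cc]
        · rw [if_neg hn2]
          norm_num
      rw [Finset.prod_congr rfl Yc, Finset.prod_const_one, Vc]
  · rw [Prod.snd_prod]
    simp only [YLW, varpiLW, qpow, Psi, varpi, Prod.snd_mul, Prod.snd_inv]
    rw [Finset.prod_eq_one, Finset.sum_eq_zero]
    · norm_num
    · intro k _
      by_cases hkM : k ≤ M
      · rw [if_pos hkM]; exact Int.cast_zero
      · rw [if_neg hkM, if_neg (by omega), mul_zero]; exact Int.cast_zero
    · intro l _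
      rw [Finset.sum_eq_zero]
      · norm_num
      · intro k _
        by_cases hkM : k ≤ M
        · rw [if_pos hkM]; exact Int.cast_zero
        · rw [if_neg hkM, if_neg (by omega)]; exact Int.cast_zero
lemma Htab_val (i m k l : ℕ) (hk : 1 ≤ k) (hki : k ≤ i) (hl : 1 ≤ l) (hlm : l ≤ m) :
    Htab i m (-(k : ℤ), -(l : ℤ)) = i + 1 - k := by
  simp only [Htab, neg_neg, Int.toNat_natCast]
  rw [if_pos ⟨by exact_mod_cast hk, by exact_mod_cast hki, by exact_mod_cast hl,
    by exact_mod_cast hlm⟩]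

lemma mH_eq {M N : ℕ} (hM : 1 ≤ M) {q : ℂ} (hq : q ≠ 0) (i m : ℕ) (hi : 1 ≤ i)
    (hiM : i ≤ M) (a : ℂ) :
    mTab M N q i m a (Htab i m) = varpiLW M N q i m a := by
  unfold mTab
  rw [Finset.prod_comm]
  have inner : ∀ l ∈ Finset.Icc 1 m,
      (∏ k ∈ Finset.Icc 1 i,
        box M N q (Htab i m (-(k : ℤ), -(l : ℤ))) (a * tau M N q i * q ^ (2 * ((k : ℤ) - (l : ℤ)))))
      = YLW M N q i (a * q ^ (2 - 2 * (l : ℤ))) := by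
    intro l hl
    rw [← part1 hM hq i hi hiM a (l : ℤ)]
    rw [Finset.mem_Icc] at hl
    refine Finset.prod_nbij' (fun k => i + 1 - k) (fun k => i + 1 - k) ?_ ?_ ?_ ?_ ?_
    · intro k hk
      simp only [Finset.mem_Icc] at *
      omega
    · intro k hk
      simp only [Finset.mem_Icc] at *
      omega
    · intro k hk
      simp only [Finset.mem_Icc] at hk
      omega
    · intro k hk
      simp only [Finset.mem_Icc] at hk
      omega
    · intro k hk
      simp only [Finset.mem_Icc] at hk
      rw [Htab_val i m k l hk.1 hk.2 hl.1 hl.2]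
      beta_reduce
      congr 3
      omega
  rw [Finset.prod_congr rfl inner, prodY hq i hiM a m]
lemma mem_Yp_wt {M N i m : ℕ} (hiM : i ≤ M) (k l : ℕ) :
    (k, l) ∈ Yp M N (wt i m) ↔ 1 ≤ k ∧ k ≤ i ∧ 1 ≤ l ∧ l ≤ m := by
  unfold Yp wt
  simp only [Set.mem_setOf_eq]
  constructor
  · rintro ⟨h1, h2, h3 | h3⟩
    · refine ⟨h1, ?_, h2, ?_⟩ <;>
      · rcases h3 with ⟨hkM, hlw⟩
        by_cases hki : 1 ≤ k ∧ k ≤ i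
        · simp only [if_pos hki] at hlw; omega
        · simp only [if_neg hki] at hlw; omega
    · exfalso
      rcases h3 with ⟨hMk, hlN, hk⟩
      rw [if_neg (by omega : ¬(1 ≤ M + l ∧ M + l ≤ i))] at hk
      omega
  · rintro ⟨h1, h2, h3, h4⟩
    exact ⟨h1, h3, Or.inl ⟨by omega, by rw [if_pos ⟨h1, h2⟩]; omega⟩⟩

lemma mem_YnZ_wt {M N i m : ℕ} (hiM : i ≤ M) (p : ℤ × ℤ) :
    p ∈ YnZ M N (wt i m) ↔
      ∃ k l : ℕ, (1 ≤ k ∧ k ≤ i ∧ 1 ≤ l ∧ l ≤ m) ∧ p = (-(k : ℤ), -(l : ℤ)) := by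
  unfold YnZ
  simp only [Set.mem_setOf_eq]
  constructor
  · rintro ⟨k, l, hkl, hp⟩
    exact ⟨k, l, by rwa [mem_Yp_wt hiM] at hkl, hp⟩
  · rintro ⟨k, l, hkl, hp⟩
    exact ⟨k, l, (mem_Yp_wt hiM k l).mpr hkl, hp⟩

lemma mem_YnZ_wt' {M N i m : ℕ} (hiM : i ≤ M) (k l : ℕ) (h1 : 1 ≤ k) (h2 : k ≤ i)
    (h3 : 1 ≤ l) (h4 : l ≤ m) : ((-(k : ℤ), -(l : ℤ)) : ℤ × ℤ) ∈ YnZ M N (wt i m) :=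
  (mem_YnZ_wt hiM _).mpr ⟨k, l, ⟨h1, h2, h3, h4⟩, rfl⟩

lemma T_step_up {M N i m : ℕ} (hiM : i ≤ M) {T : ℤ × ℤ → ℕ}
    (hT : isTab M (M + N) (YnZ M N (wt i m)) T) (l : ℕ) (hl : 1 ≤ l) (hlm : l ≤ m) :
    ∀ d k : ℕ, 1 ≤ k → k + d ≤ i →
      min (M + 1) (T (-((k + d : ℕ) : ℤ), -(l : ℤ)) + d) ≤ T (-(k : ℤ), -(l : ℤ)) := by
  obtain ⟨h0, hrange, hweak, hcol, hrow⟩ := hT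
  intro d
  induction d with
  | zero => intro k hk hki; simpa using min_le_right _ _
  | succ d ih =>
      intro k hk hki
      show min (M + 1) (T (-((k + d + 1 : ℕ) : ℤ), -(l : ℤ)) + (d + 1)) ≤ T (-(k : ℤ), -(l : ℤ))
      have hmem1 : ((-((k + d + 1 : ℕ) : ℤ), -(l : ℤ)) : ℤ × ℤ) ∈ YnZ M N (wt i m) :=
        mem_YnZ_wt' hiM (k + d + 1) l (by omega) (by omega) hl hlm
      have hmem2 : ((-((k + d : ℕ) : ℤ), -(l : ℤ)) : ℤ × ℤ) ∈ YnZ M N (wt i m) :=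
        mem_YnZ_wt' hiM (k + d) l (by omega) (by omega) hl hlm
      have hstep : ((-((k + d + 1 : ℕ) : ℤ), -(l : ℤ)).1 + 1, (-((k + d + 1 : ℕ) : ℤ), -(l : ℤ)).2)
          = ((-((k + d : ℕ) : ℤ), -(l : ℤ)) : ℤ × ℤ) := by
        refine Prod.ext ?_ rfl
        push_cast
        ring
      by_cases hM' : T (-((k + d + 1 : ℕ) : ℤ), -(l : ℤ)) ≤ M
      · have hc := hcol _ hmem1 (by rw [show (-((k + d + 1 : ℕ) : ℤ)) + 1
            = -((k + d : ℕ) : ℤ) by push_cast; ring]; exact hmem2) hM'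
        rw [show (-((k + d + 1 : ℕ) : ℤ)) + 1 = -((k + d : ℕ) : ℤ) by push_cast; ring] at hc
        dsimp only at hc
        have hih := ih k hk (by omega)
        omega
      · have hw := hweak _ hmem1 _ (mem_YnZ_wt' hiM k l hk (by omega) hl hlm)
          (by push_cast; omega) le_rfl
        omega

lemma T_lb {M N i m : ℕ} (hiM : i ≤ M) {T : ℤ × ℤ → ℕ}
    (hT : isTab M (M + N) (YnZ M N (wt i m)) T) (k l : ℕ) (hk : 1 ≤ k) (hki : k ≤ i)
    (hl : 1 ≤ l) (hlm : l ≤ m) : i + 1 - k ≤ T (-(k : ℤ), -(l : ℤ)) := by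
  have hbase : 1 ≤ T (-(i : ℤ), -(l : ℤ)) :=
    (hT.2.1 _ (mem_YnZ_wt' hiM i l (by omega) le_rfl hl hlm)).1
  have hstep := T_step_up hiM hT l hl hlm (i - k) k hk (by omega)
  rw [show k + (i - k) = i by omega] at hstep
  omega

lemma T_ub {M N i m : ℕ} (hiM : i ≤ M) {T : ℤ × ℤ → ℕ}
    (hT : isTab M (M + N) (YnZ M N (wt i m)) T) (k l : ℕ) (hk : 1 ≤ k) (hki : k ≤ i)
    (hl : 1 ≤ l) (hlm : l ≤ m) : T (-(k : ℤ), -(l : ℤ)) ≤ M + N :=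
  (hT.2.1 _ (mem_YnZ_wt' hiM k l hk hki hl hlm)).2

lemma T_top {M N i m : ℕ} (hi : 1 ≤ i) (hiM : i ≤ M) (hm : 1 ≤ m) {T : ℤ × ℤ → ℕ}
    (hT : isTab M (M + N) (YnZ M N (wt i m)) T) (hne : T ≠ Htab i m) :
    i + 1 ≤ T (-((1 : ℕ) : ℤ), -((1 : ℕ) : ℤ)) := by
  have hdiff : ∃ k l : ℕ, (1 ≤ k ∧ k ≤ i ∧ 1 ≤ l ∧ l ≤ m) ∧
      T (-(k : ℤ), -(l : ℤ)) ≠ i + 1 - k := by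
    by_contra hcon
    push_neg at hcon
    apply hne
    funext p
    by_cases hp : p ∈ YnZ M N (wt i m)
    · obtain ⟨k, l, hkl, rfl⟩ := (mem_YnZ_wt hiM p).mp hp
      rw [hcon k l hkl, Htab_val i m k l hkl.1 hkl.2.1 hkl.2.2.1 hkl.2.2.2]
    · rw [hT.1 p hp]
      unfold Htab
      rw [if_neg]
      rintro ⟨c1, c2, c3, c4⟩
      exact hp ((mem_YnZ_wt hiM p).mpr ⟨(-p.1).toNat, (-p.2).toNat,
        ⟨by omega, by omega, by omega, by omega⟩, Prod.ext (by omega) (by omega)⟩)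
  obtain ⟨k, l, ⟨hk1, hk2, hl1, hl2⟩, hne'⟩ := hdiff
  have hlb := T_lb hiM hT k l hk1 hk2 hl1 hl2
  have hup := T_step_up hiM hT l hl1 hl2 (k - 1) 1 le_rfl (by omega)
  rw [show 1 + (k - 1) = k by omega] at hup
  have hw := hT.2.2.1 (-((1 : ℕ) : ℤ), -(l : ℤ)) (mem_YnZ_wt' hiM 1 l le_rfl hi hl1 hl2)
    (-((1 : ℕ) : ℤ), -((1 : ℕ) : ℤ)) (mem_YnZ_wt' hiM 1 1 le_rfl hi le_rfl hm)
    le_rfl (by push_cast; omega)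
  omega
/-- the product of `A⁻¹`-factors converting `box (i+1-k)` into `box (T (-k,-l))` -/
def chainF (M N : ℕ) (q : ℂ) (i : ℕ) (a : ℂ) (T : ℤ × ℤ → ℕ) (k l : ℕ) : LW :=
  ∏ r ∈ Finset.Icc (i + 1 - k) (T (-(k : ℤ), -(l : ℤ)) - 1),
    (Amat M N q r (a * tau M N q i * q ^ (2 * ((k : ℤ) - l)) * q * (tau M N q r)⁻¹))⁻¹

lemma Ainv_mem {M N : ℕ} {q : ℂ} (j : ℕ) (b : ℂ) (h1 : 1 ≤ j) (h2 : j ≤ M + N - 1)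
    (hb : b ≠ 0) : (Amat M N q j b)⁻¹ ∈ LQneg M N q :=
  Submonoid.subset_closure ⟨j, b, h1, h2, hb, rfl⟩

lemma chainF_mem {M N : ℕ} (hM : 1 ≤ M) {q : ℂ} (hq : q ≠ 0) {i m : ℕ} (hiM : i ≤ M)
    {a : ℂ} (ha : a ≠ 0) {T : ℤ × ℤ → ℕ}
    (hT : isTab M (M + N) (YnZ M N (wt i m)) T) (k l : ℕ) (hk : 1 ≤ k) (hki : k ≤ i)
    (hl : 1 ≤ l) (hlm : l ≤ m) : chainF M N q i a T k l ∈ LQneg M N q := by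
  refine Submonoid.prod_mem _ (fun r hr => ?_)
  simp only [Finset.mem_Icc] at hr
  have hub := T_ub hiM hT k l hk hki hl hlm
  refine Ainv_mem r _ (by omega) (by omega) ?_
  exact mul_ne_zero (mul_ne_zero (mul_ne_zero (mul_ne_zero ha (tau_ne hq i))
    (zpow_ne_zero _ hq)) hq) (inv_ne_zero (tau_ne hq r))
/-- tableau monomials for Kirillov–Reshetikhin modules, `1 ≤ i ≤ M`:
(1) `∏_{k=1}^{i} ⬜k_{aτ_i q^{2(i+1-k-l)}} = Y_{i,aq^{2-2l}}` and `m_H = ϖ^{(i)}_{m,a}`;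
(2) for `T ≠ H`, `m_T m_H⁻¹ ∈ A_{i,aq}⁻¹ ℒ𝒬⁻`. -/
theorem statement9 (M N : ℕ) (hM : 1 ≤ M) (hN : 1 ≤ N) (q : ℂ) (hq : q ≠ 0)
    (hroot : ∀ n : ℕ, 0 < n → q ^ n ≠ 1) (i m : ℕ) (hi : 1 ≤ i) (hiM : i ≤ M)
    (hm : 1 ≤ m) (a : ℂ) (ha : a ≠ 0) :
    (∀ l : ℕ, 1 ≤ l → l ≤ m →
      ∏ k ∈ Finset.Icc 1 i, box M N q k (a * tau M N q i * q ^ (2 * ((i : ℤ) + 1 - k - l)))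
        = YLW M N q i (a * q ^ (2 - 2 * (l : ℤ)))) ∧
    mTab M N q i m a (Htab i m) = varpiLW M N q i m a ∧
    ∀ T ∈ Bneg M N (wt i m), T ≠ Htab i m →
      ∃ n ∈ LQneg M N q,
        mTab M N q i m a T * (mTab M N q i m a (Htab i m))⁻¹ =
          (Amat M N q i (a * q))⁻¹ * n := by
  refine ⟨fun l _ _ => part1 hM hq i hi hiM a (l : ℤ), mH_eq hM hq i m hi hiM a, ?_⟩
  intro T hT hne
  have hTab : isTab M (M + N) (YnZ M N (wt i m)) T := hT
  -- Step 1: m_T = m_H * P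
  have hstep : ∀ k ∈ Finset.Icc 1 i, ∀ l ∈ Finset.Icc 1 m,
      box M N q (T (-(k : ℤ), -(l : ℤ))) (a * tau M N q i * q ^ (2 * ((k : ℤ) - l)))
        = box M N q (Htab i m (-(k : ℤ), -(l : ℤ)))
            (a * tau M N q i * q ^ (2 * ((k : ℤ) - l))) * chainF M N q i a T k l := by
    intro k hk l hl
    simp only [Finset.mem_Icc] at hk hl
    rw [Htab_val i m k l hk.1 hk.2 hl.1 hl.2]
    exact box_chain hM hq _ (i + 1 - k) (by omega) _
      (T_lb hiM hTab k l hk.1 hk.2 hl.1 hl.2)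
  have hmT : mTab M N q i m a T = mTab M N q i m a (Htab i m) *
      ∏ k ∈ Finset.Icc 1 i, ∏ l ∈ Finset.Icc 1 m, chainF M N q i a T k l := by
    unfold mTab
    rw [Finset.prod_congr rfl (fun k hk => Finset.prod_congr rfl (fun l hl => hstep k hk l hl))]
    simp only [Finset.prod_mul_distrib]
  -- nonvanishing of m_H components
  have hHne : ∀ n, (mTab M N q i m a (Htab i m)).1 n ≠ 0 := by
    intro n
    unfold mTab
    simp only [Prod.fst_prod, Finset.prod_apply]
    rw [Finset.prod_ne_zero_iff]
    intro k _
    rw [Finset.prod_ne_zero_iff]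
    intro l _
    exact box_fst_ne hq _ _ n
  -- peeling off A_{i,aq}⁻¹ from chainF 1 1
  have htop := T_top hi hiM hm hTab hne
  have hb11 : a * tau M N q i * q ^ (2 * (((1 : ℕ) : ℤ) - ((1 : ℕ) : ℤ))) * q *
      (tau M N q i)⁻¹ = a * q := by
    rw [show (2 * (((1 : ℕ) : ℤ) - ((1 : ℕ) : ℤ))) = 0 by norm_num, zpow_zero, mul_one]
    have hτ := tau_ne (M := M) (N := N) hq i
    field_simp
  have hmemi : i ∈ Finset.Icc (i + 1 - 1) (T (-((1 : ℕ) : ℤ), -((1 : ℕ) : ℤ)) - 1) := by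
    simp only [Finset.mem_Icc]
    omega
  have h11 : chainF M N q i a T 1 1 = (Amat M N q i (a * q))⁻¹ *
      ∏ r ∈ (Finset.Icc (i + 1 - 1) (T (-((1 : ℕ) : ℤ), -((1 : ℕ) : ℤ)) - 1)).erase i,
        (Amat M N q r (a * tau M N q i * q ^ (2 * (((1 : ℕ) : ℤ) - ((1 : ℕ) : ℤ))) * q *
          (tau M N q r)⁻¹))⁻¹ := by
    unfold chainF
    rw [← Finset.mul_prod_erase _ _ hmemi, hb11]
  -- peel (k,l) = (1,1) from the double product
  have hmem1i : (1 : ℕ) ∈ Finset.Icc 1 i := Finset.mem_Icc.mpr ⟨le_rfl, hi⟩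
  have hmem1m : (1 : ℕ) ∈ Finset.Icc 1 m := Finset.mem_Icc.mpr ⟨le_rfl, hm⟩
  have hP : (∏ k ∈ Finset.Icc 1 i, ∏ l ∈ Finset.Icc 1 m, chainF M N q i a T k l)
      = chainF M N q i a T 1 1 *
        ((∏ l ∈ (Finset.Icc 1 m).erase 1, chainF M N q i a T 1 l) *
         ∏ k ∈ (Finset.Icc 1 i).erase 1, ∏ l ∈ Finset.Icc 1 m, chainF M N q i a T k l) := by
    rw [← Finset.mul_prod_erase _ _ hmem1i, ← Finset.mul_prod_erase _ _ hmem1m, mul_assoc]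
  -- membership of the remainder
  have hS : (∏ r ∈ (Finset.Icc (i + 1 - 1) (T (-((1 : ℕ) : ℤ), -((1 : ℕ) : ℤ)) - 1)).erase i,
        (Amat M N q r (a * tau M N q i * q ^ (2 * (((1 : ℕ) : ℤ) - ((1 : ℕ) : ℤ))) * q *
          (tau M N q r)⁻¹))⁻¹) ∈ LQneg M N q := by
    refine Submonoid.prod_mem _ (fun r hr => ?_)
    have hr' := Finset.mem_of_mem_erase hr
    simp only [Finset.mem_Icc] at hr'
    have hub := T_ub hiM hTab 1 1 le_rfl hi le_rfl hm
    refine Ainv_mem r _ (by omega) (by omega) ?_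
    exact mul_ne_zero (mul_ne_zero (mul_ne_zero (mul_ne_zero ha (tau_ne hq i))
      (zpow_ne_zero _ hq)) hq) (inv_ne_zero (tau_ne hq r))
  have hR : ((∏ l ∈ (Finset.Icc 1 m).erase 1, chainF M N q i a T 1 l) *
         ∏ k ∈ (Finset.Icc 1 i).erase 1, ∏ l ∈ Finset.Icc 1 m, chainF M N q i a T k l)
      ∈ LQneg M N q := by
    refine Submonoid.mul_mem _ ?_ ?_
    · refine Submonoid.prod_mem _ (fun l hl => ?_)
      have hl' := Finset.mem_of_mem_erase hl
      simp only [Finset.mem_Icc] at hl'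
      exact chainF_mem hM hq hiM ha hTab 1 l le_rfl hi hl'.1 hl'.2
    · refine Submonoid.prod_mem _ (fun k hk => ?_)
      have hk' := Finset.mem_of_mem_erase hk
      simp only [Finset.mem_Icc] at hk'
      refine Submonoid.prod_mem _ (fun l hl => ?_)
      simp only [Finset.mem_Icc] at hl
      exact chainF_mem hM hq hiM ha hTab k l hk'.1 hk'.2 hl.1 hl.2
  refine ⟨_, Submonoid.mul_mem _ hS hR, ?_⟩
  rw [hmT, mul_right_comm, LW_mul_inv hHne, one_mul, hP, h11, mul_assoc]

end QAS
end
end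

section
/- Let M < i ≤ κ, set L := κ+1−i and t_i := τ_{i−1}²q⁻², and let a ∈ ℂˣ. For any nonnegative integers c_1,…,c_L the following identities hold in ℂ(z), where μ := Σ_{l=1}^{L} c_l ε_{κ+1−l} ∈ ℤ^I and ν := Σ_{l=1}^{L} c_l ε_{i+l−1} ∈ ℤ^I: (1) ∏_{l=1}^{L} ∏_{k=1}^{c_l} q·(1−zaq^{2(k−l)})/(1−zaq^{2(k−l+1)}) = ∏_{j=i}^{κ} ((q^{(μ,ε_j)} − zaθ_j q^{−(μ,ε_j)})/(1−zaθ_j))^{(ε_j,ε_j)}; (2) ∏_{l=1}^{L} ∏_{k=1}^{c_l} q⁻¹·(1−zat_iq^{2(l−k+1)})/(1−zat_iq^{2(l−k)}) = ∏_{j=i}^{κ} ((q^{−(ν,ε_j)} − zaθ_j q^{(ν,ε_j)})/(1−zaθ_j))^{(ε_j,ε_j)}. -/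
noncomputable section

namespace QAS

/-- `(λ, ε_j)` for `λ ∈ ℤ^I` -/
def epsPairing (M : ℕ) (lam : ℕ → ℤ) (j : ℕ) : ℤ := lam j * sgn M j

/-- `μ = Σ_{l=1}^{L} c_l ε_{κ+1-l}` -/
def muVec (M N i : ℕ) (c : ℕ → ℕ) : ℕ → ℤ := fun j =>
  ∑ l ∈ Finset.Icc 1 (M + N + 1 - i), if j = M + N + 1 - l then (c l : ℤ) else 0

/-- `ν = Σ_{l=1}^{L} c_l ε_{i+l-1}` -/
def nuVec (M N i : ℕ) (c : ℕ → ℕ) : ℕ → ℤ := fun j =>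
  ∑ l ∈ Finset.Icc 1 (M + N + 1 - i), if j = i + l - 1 then (c l : ℤ) else 0

lemma Cc_mul (x y : ℂ) : Cc (x*y) = Cc x * Cc y := map_mul _ _ _
lemma Cc_one : Cc 1 = 1 := map_one _

lemma lin_ne (u v : ℂ) (hu : u ≠ 0) : Cc u - Cc v * Z ≠ 0 := by
  have h : Cc u - Cc v * Z = algebraMap (Polynomial ℂ) (RatFunc ℂ)
      (Polynomial.C u - Polynomial.C v * Polynomial.X) := by
    simp [Cc, Z, RatFunc.algebraMap_C, RatFunc.algebraMap_X]
  rw [h]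
  apply RatFunc.algebraMap_ne_zero
  intro hcon
  apply hu
  have := congrArg (fun p => Polynomial.coeff p 0) hcon
  simpa using this

lemma one_lin_ne (v : ℂ) : (1 : RatFunc ℂ) - Cc v * Z ≠ 0 := by
  simpa [Cc_one] using lin_ne 1 v one_ne_zero

lemma Cc_ne_zero {u : ℂ} (hu : u ≠ 0) : Cc u ≠ 0 := by
  have := lin_ne u 0 hu
  simpa [Cc, map_zero] using this

lemma tele1 (q : ℂ) (hq : q ≠ 0) (b : ℂ) (c : ℕ) :
    ∏ k ∈ Finset.Icc 1 c, Cc q * (1 - Cc (b * q ^ (2*(k:ℤ) - 2)) * Z) /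
        (1 - Cc (b * q ^ (2*(k:ℤ))) * Z)
      = Cc (q ^ (c:ℤ)) * (1 - Cc b * Z) / (1 - Cc (b * q ^ (2*(c:ℤ))) * Z) := by
  induction c with
  | zero =>
    simp only [Nat.cast_zero, mul_zero, zpow_zero, mul_one, Cc_one, one_mul]
    rw [Finset.Icc_eq_empty (by omega), Finset.prod_empty, div_self (one_lin_ne b)]
  | succ n ih =>
    rw [Finset.prod_Icc_succ_top (Nat.le_add_left 1 n), ih]
    simp only [Nat.cast_add, Nat.cast_one]
    rw [show 2*((n:ℤ)+1) - 2 = 2*(n:ℤ) by ring, zpow_add₀ hq ((n:ℤ)) 1, zpow_one,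
      Cc_mul (q ^ (n:ℤ)) q]
    have h1 := one_lin_ne (b * q ^ (2*(n:ℤ)))
    have h2 := one_lin_ne (b * q ^ (2*((n:ℤ)+1)))
    rw [div_mul_div_comm, div_eq_div_iff (mul_ne_zero h1 h2) h2]
    ring

lemma final (q : ℂ) (hq : q ≠ 0) (b : ℂ) (E : ℤ) :
    Cc (q ^ E) * (1 - Cc b * Z) / (1 - Cc (b * q ^ (2*E)) * Z)
      = (1 - Cc b * Z) / (Cc (q ^ (-E)) - Cc (b * q ^ E) * Z) := by
  have key : Cc (q ^ E) * (Cc (q ^ (-E)) - Cc (b * q ^ E) * Z)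
      = 1 - Cc (b * q ^ (2*E)) * Z := by
    have h1 : q ^ E * q ^ (-E) = 1 := by rw [← zpow_add₀ hq]; simp
    have h2 : q ^ E * (b * q ^ E) = b * q ^ (2*E) := by
      rw [show (2*E) = E + E by ring, zpow_add₀ hq]; ring
    rw [mul_sub, ← Cc_mul, h1, Cc_one, ← mul_assoc, ← Cc_mul, h2]
  rw [← key, mul_div_mul_left _ _ (Cc_ne_zero (zpow_ne_zero E hq))]

/-- the two product identities in `ℂ(z)` used to compute the spectra
of `C_i(z)` for `M < i ≤ κ`, `t_i = τ_{i-1}² q⁻²`. -/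
theorem statement11 (M N : ℕ) (hM : 1 ≤ M) (hN : 1 ≤ N) (q : ℂ) (hq : q ≠ 0)
    (hroot : ∀ n : ℕ, 0 < n → q ^ n ≠ 1) (i : ℕ) (hi : M < i) (hi' : i ≤ M + N)
    (a : ℂ) (ha : a ≠ 0) (c : ℕ → ℕ) :
    ((∏ l ∈ Finset.Icc 1 (M + N + 1 - i), ∏ k ∈ Finset.Icc 1 (c l),
        Cc q * (1 - Cc (a * q ^ (2 * ((k : ℤ) - l))) * Z) /
          (1 - Cc (a * q ^ (2 * ((k : ℤ) - l + 1))) * Z)) =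
      ∏ j ∈ Finset.Icc i (M + N),
        ((Cc (q ^ epsPairing M (muVec M N i c) j) -
            Cc (a * theta M N q j * q ^ (-epsPairing M (muVec M N i c) j)) * Z) /
          (1 - Cc (a * theta M N q j) * Z)) ^ sgn M j) ∧
    ((∏ l ∈ Finset.Icc 1 (M + N + 1 - i), ∏ k ∈ Finset.Icc 1 (c l),
        Cc q⁻¹ *
          (1 - Cc (a * (tau M N q (i - 1) ^ 2 * (q ^ 2)⁻¹) * q ^ (2 * ((l : ℤ) - k + 1))) * Z) /
          (1 - Cc (a * (tau M N q (i - 1) ^ 2 * (q ^ 2)⁻¹) * q ^ (2 * ((l : ℤ) - k))) * Z)) =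
      ∏ j ∈ Finset.Icc i (M + N),
        ((Cc (q ^ (-epsPairing M (nuVec M N i c) j)) -
            Cc (a * theta M N q j * q ^ epsPairing M (nuVec M N i c) j) * Z) /
          (1 - Cc (a * theta M N q j) * Z)) ^ sgn M j) := by
  have reindex1 : ∀ (f : ℕ → RatFunc ℂ),
      ∏ j ∈ Finset.Icc i (M+N), f j = ∏ l ∈ Finset.Icc 1 (M+N+1-i), f (M+N+1-l) := by
    intro f
    refine Finset.prod_nbij' (fun j => M+N+1-j) (fun l => M+N+1-l) ?_ ?_ ?_ ?_ ?_ <;>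
      simp only [Finset.mem_Icc] <;> intro x hx
    · omega
    · omega
    · omega
    · omega
    · congr 1; omega
  have reindex2 : ∀ (f : ℕ → RatFunc ℂ),
      ∏ j ∈ Finset.Icc i (M+N), f j = ∏ l ∈ Finset.Icc 1 (M+N+1-i), f (i+l-1) := by
    intro f
    refine Finset.prod_nbij' (fun j => j-i+1) (fun l => i+l-1) ?_ ?_ ?_ ?_ ?_ <;>
      simp only [Finset.mem_Icc] <;> intro x hx
    · omega
    · omega
    · omega
    · omega
    · congr 1; omega
  constructor
  · -- identity (1)
    rw [reindex1]
    refine Finset.prod_congr rfl ?_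
    intro l hl
    simp only [Finset.mem_Icc] at hl
    have hsgn : sgn M (M+N+1-l) = -1 := by unfold sgn; rw [if_neg (by omega)]
    have htheta : theta M N q (M+N+1-l) = q ^ (2*(1-(l:ℤ))) := by
      unfold theta; rw [if_neg (by omega)]; congr 1; omega
    have hmu : muVec M N i c (M+N+1-l) = (c l : ℤ) := by
      unfold muVec
      rw [Finset.sum_eq_single l]
      · rw [if_pos rfl]
      · intro l' hl' hne
        simp only [Finset.mem_Icc] at hl'
        rw [if_neg (by omega)]
      · intro h; exact absurd (Finset.mem_Icc.mpr ⟨hl.1, hl.2⟩) h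
    have hE : epsPairing M (muVec M N i c) (M+N+1-l) = -(c l : ℤ) := by
      unfold epsPairing; rw [hmu, hsgn]; ring
    rw [hE, hsgn, htheta, neg_neg, zpow_neg_one, inv_div]
    have hLHS : ∏ k ∈ Finset.Icc 1 (c l),
        Cc q * (1 - Cc (a * q ^ (2 * ((k : ℤ) - l))) * Z) /
          (1 - Cc (a * q ^ (2 * ((k : ℤ) - l + 1))) * Z)
        = ∏ k ∈ Finset.Icc 1 (c l),
        Cc q * (1 - Cc ((a * q ^ (2*(1-(l:ℤ)))) * q ^ (2*(k:ℤ) - 2)) * Z) /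
          (1 - Cc ((a * q ^ (2*(1-(l:ℤ)))) * q ^ (2*(k:ℤ))) * Z) := by
      refine Finset.prod_congr rfl ?_
      intro k _
      have e1 : a * q ^ (2 * ((k:ℤ) - l)) = (a * q ^ (2*(1-(l:ℤ)))) * q ^ (2*(k:ℤ) - 2) := by
        rw [mul_assoc, ← zpow_add₀ hq]; congr 1; ring
      have e2 : a * q ^ (2 * ((k:ℤ) - l + 1)) = (a * q ^ (2*(1-(l:ℤ)))) * q ^ (2*(k:ℤ)) := by
        rw [mul_assoc, ← zpow_add₀ hq]; congr 1; ring
      rw [e1, e2]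
    rw [hLHS, tele1 q hq _ (c l), final q hq _ (c l)]
  · -- identity (2)
    have hpow2 : ∀ e : ℤ, (q^e)^2 * ((q:ℂ)^(2:ℕ))⁻¹ = q^(2*e-2) := by
      intro e
      rw [sq (q^e), ← zpow_add₀ hq, ← zpow_natCast q 2, ← zpow_neg, ← zpow_add₀ hq]
      congr 1; ring
    have htau : tau M N q (i-1) ^ 2 * ((q:ℂ)^2)⁻¹ = q ^ (2*((i:ℤ)-M-N-1)) := by
      unfold tau
      split_ifs with h
      · rw [show ((i-1:ℕ):ℤ) = (i:ℤ)-1 by omega, hpow2]; congr 1; omega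
      · rw [show ((i-1:ℕ):ℤ) = (i:ℤ)-1 by omega, hpow2]; congr 1; omega
    rw [reindex2]
    refine Finset.prod_congr rfl ?_
    intro l hl
    simp only [Finset.mem_Icc] at hl
    have hsgn : sgn M (i+l-1) = -1 := by unfold sgn; rw [if_neg (by omega)]
    have htheta : theta M N q (i+l-1) = q ^ (2*((i:ℤ)+l-1-M-N)) := by
      unfold theta; rw [if_neg (by omega)]; congr 1; omega
    have hnu : nuVec M N i c (i+l-1) = (c l : ℤ) := by
      unfold nuVec
      rw [Finset.sum_eq_single l]
      · rw [if_pos rfl]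
      · intro l' hl' hne
        simp only [Finset.mem_Icc] at hl'
        rw [if_neg (by omega)]
      · intro h; exact absurd (Finset.mem_Icc.mpr ⟨hl.1, hl.2⟩) h
    have hE : epsPairing M (nuVec M N i c) (i+l-1) = -(c l : ℤ) := by
      unfold epsPairing; rw [hnu, hsgn]; ring
    rw [hE, hsgn, htheta, neg_neg, zpow_neg_one, inv_div]
    have hLHS : ∏ k ∈ Finset.Icc 1 (c l),
        Cc q⁻¹ *
          (1 - Cc (a * (tau M N q (i - 1) ^ 2 * (q ^ 2)⁻¹) * q ^ (2 * ((l : ℤ) - k + 1))) * Z) /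
          (1 - Cc (a * (tau M N q (i - 1) ^ 2 * (q ^ 2)⁻¹) * q ^ (2 * ((l : ℤ) - k))) * Z)
        = ∏ k ∈ Finset.Icc 1 (c l),
        Cc q⁻¹ * (1 - Cc ((a * q ^ (2*((i:ℤ)+l-1-M-N))) * (q⁻¹) ^ (2*(k:ℤ) - 2)) * Z) /
          (1 - Cc ((a * q ^ (2*((i:ℤ)+l-1-M-N))) * (q⁻¹) ^ (2*(k:ℤ))) * Z) := by
      refine Finset.prod_congr rfl ?_
      intro k _
      have e1 : a * (tau M N q (i - 1) ^ 2 * (q ^ 2)⁻¹) * q ^ (2 * ((l:ℤ) - k + 1))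
          = (a * q ^ (2*((i:ℤ)+l-1-M-N))) * (q⁻¹) ^ (2*(k:ℤ) - 2) := by
        rw [htau, inv_zpow, ← zpow_neg, mul_assoc, mul_assoc, ← zpow_add₀ hq, ← zpow_add₀ hq]
        congr 1; ring
      have e2 : a * (tau M N q (i - 1) ^ 2 * (q ^ 2)⁻¹) * q ^ (2 * ((l:ℤ) - k))
          = (a * q ^ (2*((i:ℤ)+l-1-M-N))) * (q⁻¹) ^ (2*(k:ℤ)) := by
        rw [htau, inv_zpow, ← zpow_neg, mul_assoc, mul_assoc, ← zpow_add₀ hq, ← zpow_add₀ hq]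
        congr 1; ring
      rw [e1, e2]
    rw [hLHS, tele1 q⁻¹ (inv_ne_zero hq) _ (c l), final q⁻¹ (inv_ne_zero hq) _ (c l)]
    rw [show ((q⁻¹) ^ (-(c l:ℤ))) = q ^ ((c l:ℤ)) by rw [inv_zpow, ← zpow_neg, neg_neg],
      show ((q⁻¹) ^ ((c l:ℤ))) = q ^ (-(c l:ℤ)) by rw [inv_zpow, ← zpow_neg]]

end QAS
end
end
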